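/- arXiv:2101.06061 — 2 statements merged into one kernel-verified Lean document; each statement's English description precedes it below -/
import Mathlib

section
/- For a standard one-dimensional Brownian motion ω started at 0 and any d > 0 and t > 0, the probability that sup_{0 ≤ s ≤ t} ω(s) ≥ d equals 2·P(ω(t) ≥ d). -/
open MeasureTheory ProbabilityTheory Real

/-- A standard one-dimensional Brownian motion started at `0` with respect to a
probability measure `P`: it starts at `0`, has independent increments, Gaussian
increments with mean `0` and variance equal to the time increment, and a.s.
continuous paths. -/
structure IsStdBrownianMotion {Ω : Type*} [MeasurableSpace Ω] (P : Measure Ω)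
    (W : ℝ → Ω → ℝ) : Prop where
  meas : ∀ t : ℝ, Measurable (W t)
  start : ∀ᵐ ω ∂P, W 0 ω = 0
  indepIncr : ∀ (n : ℕ) (t : Fin (n + 1) → ℝ), Monotone t → (∀ i, 0 ≤ t i) →
    iIndepFun
      (fun i : Fin n => fun ω => W (t i.succ) ω - W (t i.castSucc) ω) P
  gaussIncr : ∀ s t : ℝ, 0 ≤ s → s < t → ∀ a : ℝ,
    (P {ω | W t ω - W s ω ≤ a}).toReal =
      ∫ u in Set.Iic a, Real.exp (-(u ^ 2) / (2 * (t - s))) / Real.sqrt (2 * Real.pi * (t - s))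
  cont : ∀ᵐ ω ∂P, Continuous fun t => W t ω

open scoped NNReal ENNReal
open Filter Topology

namespace RP

lemma gauss_neg (v : ℝ≥0) :
    Measure.map (fun x : ℝ => -x) (gaussianReal 0 v) = gaussianReal 0 v := by
  have h := gaussianReal_map_const_mul (μ := 0) (v := v) (-1)
  simp only [neg_one_mul, mul_zero] at h
  rw [h]
  congr 1
  ext
  norm_num

lemma gauss_neg_apply (v : ℝ≥0) {s : Set ℝ} (hs : MeasurableSet s) :
    gaussianReal 0 v ((fun x : ℝ => -x) ⁻¹' s) = gaussianReal 0 v s := by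
  rw [← Measure.map_apply measurable_neg hs, gauss_neg]

lemma pi_eval {n : ℕ} (μ : Fin n → Measure ℝ) [∀ i, IsProbabilityMeasure (μ i)]
    (i : Fin n) {s : Set ℝ} (hs : MeasurableSet s) :
    Measure.pi μ (Function.eval i ⁻¹' s) = μ i s := by
  rw [Set.eval_preimage, Measure.pi_pi]
  refine Fintype.prod_eq_single i (fun j hj => ?_) |>.trans (by rw [Function.update_self])
  rw [Function.update_of_ne hj]
  exact measure_univ

def bsum {n : ℕ} (k : ℕ) (x : Fin n → ℝ) : ℝ :=
  ∑ i ∈ Finset.univ.filter (fun i : Fin n => (i : ℕ) < k), x i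

lemma bsum_zero {n : ℕ} (x : Fin n → ℝ) : bsum 0 x = 0 := by
  simp [bsum]

lemma measurable_bsum {n : ℕ} (k : ℕ) : Measurable (bsum (n := n) k) :=
  Finset.measurable_sum _ (fun i _ => measurable_pi_apply i)

lemma bsum_succ {n k : ℕ} (hk : k < n) (x : Fin n → ℝ) :
    bsum (k + 1) x = bsum k x + x ⟨k, hk⟩ := by
  have h : Finset.univ.filter (fun i : Fin n => (i : ℕ) < k + 1)
      = insert (⟨k, hk⟩ : Fin n) (Finset.univ.filter (fun i : Fin n => (i : ℕ) < k)) := by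
    ext i
    simp [Nat.lt_succ_iff_lt_or_eq, Fin.ext_iff, or_comm]
    omega
  rw [bsum, h, Finset.sum_insert (by simp), bsum, add_comm]

def flipAt {n : ℕ} (k : ℕ) (x : Fin n → ℝ) : Fin n → ℝ :=
  fun i => if (i : ℕ) < k then x i else -x i

lemma measurable_flipAt {n : ℕ} (k : ℕ) : Measurable (flipAt (n := n) k) := by
  refine measurable_pi_lambda _ (fun i => ?_)
  by_cases h : (i : ℕ) < k <;> simp only [flipAt, h, if_true, if_false]
  · exact measurable_pi_apply i
  · exact (measurable_pi_apply i).neg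

lemma flipAt_flipAt {n : ℕ} (k : ℕ) (x : Fin n → ℝ) : flipAt k (flipAt k x) = x := by
  funext i
  simp only [flipAt]
  split_ifs <;> simp

lemma bsum_flipAt_of_le {n : ℕ} {j k : ℕ} (hjk : j ≤ k) (x : Fin n → ℝ) :
    bsum j (flipAt k x) = bsum j x := by
  refine Finset.sum_congr rfl (fun i hi => ?_)
  simp only [Finset.mem_filter] at hi
  simp [flipAt, lt_of_lt_of_le hi.2 hjk]

lemma bsum_flipAt_add {n : ℕ} {j k : ℕ} (hkj : k ≤ j) (x : Fin n → ℝ) :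
    bsum j (flipAt k x) + bsum j x = 2 * bsum k x := by
  rw [bsum, bsum, ← Finset.sum_add_distrib]
  have h : ∀ i ∈ Finset.univ.filter (fun i : Fin n => (i : ℕ) < j),
      flipAt k x i + x i = if (i : ℕ) < k then 2 * x i else 0 := by
    intro i _
    by_cases h : (i : ℕ) < k <;> simp [flipAt, h] <;> ring
  rw [Finset.sum_congr rfl h, Finset.sum_ite, Finset.sum_const_zero, add_zero,
    Finset.filter_filter]
  have : (Finset.univ.filter fun i : Fin n => (i : ℕ) < j ∧ (i : ℕ) < k)
      = Finset.univ.filter fun i : Fin n => (i : ℕ) < k := by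
    refine Finset.filter_congr (fun i _ => ?_)
    simp only [and_iff_right_iff_imp]
    exact fun h => lt_of_lt_of_le h hkj
  rw [this, bsum, ← Finset.mul_sum]

end RP

namespace RP

noncomputable def gpi (n : ℕ) (v : ℝ≥0) : Measure (Fin n → ℝ) :=
  Measure.pi fun _ => gaussianReal 0 v

instance (n : ℕ) (v : ℝ≥0) : IsProbabilityMeasure (gpi n v) := by
  unfold gpi; infer_instance

lemma flip_preserving (n k : ℕ) (v : ℝ≥0) :
    MeasurePreserving (flipAt k) (gpi n v) (gpi n v) := by
  refine ⟨measurable_flipAt k, ?_⟩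
  refine (Measure.pi_eq fun s hs => ?_).symm
  rw [Measure.map_apply (measurable_flipAt k) (MeasurableSet.univ_pi hs)]
  have hpre : flipAt (n := n) k ⁻¹' Set.univ.pi s
      = Set.univ.pi (fun i : Fin n => if (i : ℕ) < k then s i else (fun x : ℝ => -x) ⁻¹' s i) := by
    ext x
    simp only [Set.mem_preimage, Set.mem_pi, Set.mem_univ, true_implies, flipAt]
    refine forall_congr' fun i => ?_
    by_cases h : (i : ℕ) < k <;> simp [h]
  rw [hpre, gpi, Measure.pi_pi]
  refine Finset.prod_congr rfl fun i _ => ?_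
  by_cases h : (i : ℕ) < k <;> simp only [h, if_true, if_false]
  exact gauss_neg_apply v (hs i)

end RP

namespace RP

/-- First hit of level `c` exactly at step `k`. -/
def fh (n : ℕ) (c : ℝ) (k : ℕ) : Set (Fin n → ℝ) :=
  {x | c ≤ bsum k x ∧ ∀ j < k, bsum j x < c}

/-- Hit level `c` by step `n`. -/
def hitSet (n : ℕ) (c : ℝ) : Set (Fin n → ℝ) := {x | ∃ k ≤ n, c ≤ bsum k x}

lemma measurable_fh (n : ℕ) (c : ℝ) (k : ℕ) : MeasurableSet (fh n c k) := by
  have : fh n c k = {x : Fin n → ℝ | c ≤ bsum k x}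
      ∩ ⋂ (j : ℕ) (_ : j < k), {x : Fin n → ℝ | bsum j x < c} := by
    ext x
    simp [fh, Set.mem_iInter]
  rw [this]
  exact (measurableSet_le measurable_const (measurable_bsum k)).inter
    (MeasurableSet.iInter fun j => MeasurableSet.iInter fun _ =>
      measurableSet_lt (measurable_bsum j) measurable_const)

lemma measurable_hitSet (n : ℕ) (c : ℝ) : MeasurableSet (hitSet n c) := by
  have : hitSet n c = ⋃ (k : ℕ) (_ : k ≤ n), {x : Fin n → ℝ | c ≤ bsum k x} := by
    ext x; simp [hitSet]
  rw [this]
  exact MeasurableSet.iUnion fun k => MeasurableSet.iUnion fun _ =>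
    measurableSet_le measurable_const (measurable_bsum k)

lemma hitSet_eq_biUnion (n : ℕ) (c : ℝ) :
    hitSet n c = ⋃ k ∈ Finset.range (n + 1), fh n c k := by
  ext x
  simp only [hitSet, Set.mem_setOf_eq, Set.mem_iUnion, Finset.mem_range, Nat.lt_succ_iff]
  constructor
  · rintro ⟨k, hk, hck⟩
    have hex : ∃ m, c ≤ bsum m x := ⟨k, hck⟩
    refine ⟨Nat.find hex, le_trans (Nat.find_le hck) hk, Nat.find_spec hex, fun j hj => ?_⟩
    exact lt_of_not_ge (Nat.find_min hex hj)
  · rintro ⟨k, hk, hck, -⟩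
    exact ⟨k, hk, hck⟩

lemma fh_disjoint (n : ℕ) (c : ℝ) :
    Set.PairwiseDisjoint ↑(Finset.range (n + 1)) (fh n c) := by
  have key : ∀ k l, k < l → Disjoint (fh n c k) (fh n c l) := by
    intro k l h
    refine Set.disjoint_left.2 fun x hk hl => ?_
    exact absurd hk.1 (not_le.2 (hl.2 k h))
  intro k _ l _ hkl
  rcases hkl.lt_or_gt with h | h
  · exact key k l h
  · exact (key l k h).symm

lemma flip_fh_preimage {n : ℕ} {c : ℝ} {k : ℕ} (hkn : k ≤ n) :
    flipAt k ⁻¹' (fh n c k ∩ {x | bsum n x < c})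
      = fh n c k ∩ {x | 2 * bsum k x - bsum n x < c} := by
  ext x
  simp only [Set.mem_preimage, Set.mem_inter_iff, Set.mem_setOf_eq, fh]
  have h1 : bsum k (flipAt k x) = bsum k x := bsum_flipAt_of_le le_rfl x
  have h2 : ∀ j < k, bsum j (flipAt k x) = bsum j x :=
    fun j hj => bsum_flipAt_of_le hj.le x
  have h3 : bsum n (flipAt k x) = 2 * bsum k x - bsum n x := by
    have := bsum_flipAt_add (j := n) hkn x
    linarith
  constructor
  · rintro ⟨⟨ha, hb⟩, hcc⟩
    rw [h1] at ha
    exact ⟨⟨ha, fun j hj => by rw [← h2 j hj]; exact hb j hj⟩, by rw [h3] at hcc; exact hcc⟩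
  · rintro ⟨⟨ha, hb⟩, hcc⟩
    exact ⟨⟨by rwa [h1], fun j hj => by rw [h2 j hj]; exact hb j hj⟩, by rwa [h3]⟩

lemma reflect_eq {n : ℕ} {v : ℝ≥0} {c : ℝ} {k : ℕ} (hkn : k ≤ n) :
    gpi n v (fh n c k ∩ {x | bsum n x < c})
      = gpi n v (fh n c k ∩ {x | 2 * bsum k x - bsum n x < c}) := by
  rw [← flip_fh_preimage hkn]
  exact ((flip_preserving n k v).measure_preimage
    ((measurable_fh n c k).inter
      (measurableSet_lt (measurable_bsum n) measurable_const)).nullMeasurableSet).symm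

end RP

namespace RP

lemma measurable_levelSet {n : ℕ} (k : ℕ) (r : ℝ) :
    MeasurableSet {x : Fin n → ℝ | r ≤ bsum k x} :=
  measurableSet_le measurable_const (measurable_bsum k)

lemma fh_diff {n : ℕ} (c : ℝ) (k : ℕ) :
    fh n c k \ {x | c ≤ bsum n x} = fh n c k ∩ {x | bsum n x < c} := by
  ext x; simp [Set.mem_diff, not_le]

lemma sum_fh_inter {n : ℕ} (v : ℝ≥0) (c : ℝ) {Z : Set (Fin n → ℝ)} (hZ : MeasurableSet Z) :
    ∑ k ∈ Finset.range (n + 1), gpi n v (fh n c k ∩ Z) = gpi n v (hitSet n c ∩ Z) := by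
  rw [hitSet_eq_biUnion, Set.iUnion₂_inter]
  exact (measure_biUnion_finset
    ((fh_disjoint n c).mono fun k => Set.inter_subset_left)
    (fun k _ => (measurable_fh n c k).inter hZ)).symm

lemma discrete_upper (n : ℕ) (v : ℝ≥0) {c : ℝ} (hc : 0 < c) :
    gpi n v (hitSet n c) ≤ 2 * gpi n v {x | c ≤ bsum n x} := by
  set ν := gpi n v with hν
  have mSn : MeasurableSet {x : Fin n → ℝ | c ≤ bsum n x} := measurable_levelSet n c
  have hsplit : ∀ k, ν (fh n c k)
      = ν (fh n c k ∩ {x | c ≤ bsum n x}) + ν (fh n c k ∩ {x | bsum n x < c}) := by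
    intro k
    rw [← fh_diff, measure_inter_add_diff _ mSn]
  have hrefl : ∀ k ≤ n, ν (fh n c k ∩ {x | bsum n x < c})
      ≤ ν (fh n c k ∩ {x | c ≤ bsum n x}) := by
    intro k hk
    rw [reflect_eq hk]
    refine measure_mono fun x hx => ?_
    obtain ⟨hfh, h2⟩ := hx
    have := hfh.1
    exact ⟨hfh, by simp only [Set.mem_setOf_eq] at h2 ⊢; linarith⟩
  calc ν (hitSet n c) = ∑ k ∈ Finset.range (n + 1), ν (fh n c k) := by
        rw [hitSet_eq_biUnion]
        exact measure_biUnion_finset (fh_disjoint n c) (fun k _ => measurable_fh n c k)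
    _ ≤ ∑ k ∈ Finset.range (n + 1), (ν (fh n c k ∩ {x | c ≤ bsum n x})
          + ν (fh n c k ∩ {x | c ≤ bsum n x})) := by
        refine Finset.sum_le_sum fun k hk => ?_
        rw [hsplit k]
        exact add_le_add le_rfl (hrefl k (Nat.lt_succ_iff.1 (Finset.mem_range.1 hk)))
    _ = 2 * ∑ k ∈ Finset.range (n + 1), ν (fh n c k ∩ {x | c ≤ bsum n x}) := by
        rw [Finset.sum_add_distrib, two_mul]
    _ = 2 * ν (hitSet n c ∩ {x | c ≤ bsum n x}) := by rw [sum_fh_inter v c mSn]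
    _ ≤ 2 * ν {x | c ≤ bsum n x} := by
        exact mul_le_mul_right (measure_mono Set.inter_subset_right) 2

lemma discrete_lower (n : ℕ) (v : ℝ≥0) {c δ : ℝ} (hc : 0 < c) (hδ : 0 < δ) :
    gpi n v {x | c + 3 * δ ≤ bsum n x} + gpi n v {x | c ≤ bsum n x}
      ≤ gpi n v (hitSet n c) + gpi n v {x | ∃ i, δ < |x i|} := by
  set ν := gpi n v with hν
  set B : Set (Fin n → ℝ) := {x | ∀ i, |x i| ≤ δ} with hB
  have mB : MeasurableSet B := by
    have : B = ⋂ i : Fin n, {x : Fin n → ℝ | |x i| ≤ δ} := by ext x; simp [hB]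
    rw [this]
    exact MeasurableSet.iInter fun i =>
      measurableSet_le (measurable_pi_apply i).abs measurable_const
  have mS' : MeasurableSet {x : Fin n → ℝ | c + 3 * δ ≤ bsum n x} := measurable_levelSet n _
  have mSn : MeasurableSet {x : Fin n → ℝ | c ≤ bsum n x} := measurable_levelSet n c
  have hBc : Bᶜ = {x : Fin n → ℝ | ∃ i, δ < |x i|} := by
    ext x; simp [hB, not_forall, not_le]
  -- key subset
  have hkey : ∀ k ≤ n, fh n c k ∩ (B ∩ {x | c + 3 * δ ≤ bsum n x})
      ⊆ fh n c k ∩ {x | 2 * bsum k x - bsum n x < c} := by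
    rintro k hkn x ⟨hfh, hxB, hxS⟩
    refine ⟨hfh, ?_⟩
    simp only [Set.mem_setOf_eq] at hxS ⊢
    rcases Nat.eq_zero_or_pos k with rfl | hk0
    · exfalso
      have := hfh.1
      rw [bsum_zero] at this
      linarith
    obtain ⟨m, rfl⟩ := Nat.exists_eq_succ_of_ne_zero hk0.ne'
    have hm : m < n := Nat.lt_of_succ_le hkn
    have h1 : bsum (m + 1) x = bsum m x + x ⟨m, hm⟩ := bsum_succ hm x
    have h2 : bsum m x < c := hfh.2 m (Nat.lt_succ_self m)
    have h3 : x ⟨m, hm⟩ ≤ |x ⟨m, hm⟩| := le_abs_self _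
    have h4 : |x ⟨m, hm⟩| ≤ δ := hxB ⟨m, hm⟩
    linarith
  -- per-k inequality
  have hk2 : ∀ k ≤ n, ν (fh n c k ∩ (B ∩ {x | c + 3 * δ ≤ bsum n x}))
      ≤ ν (fh n c k ∩ {x | bsum n x < c}) := by
    intro k hkn
    rw [reflect_eq hkn]
    exact measure_mono (hkey k hkn)
  -- main inequality : ν Sn + ν (B ∩ S') ≤ ν hit
  have hmain : ν {x | c ≤ bsum n x} + ν (B ∩ {x | c + 3 * δ ≤ bsum n x}) ≤ ν (hitSet n c) := by
    have e1 : ν (hitSet n c) = ∑ k ∈ Finset.range (n + 1), ν (fh n c k) := by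
      rw [hitSet_eq_biUnion]
      exact measure_biUnion_finset (fh_disjoint n c) (fun k _ => measurable_fh n c k)
    have e2 : ∀ k, ν (fh n c k)
        = ν (fh n c k ∩ {x | c ≤ bsum n x}) + ν (fh n c k ∩ {x | bsum n x < c}) := by
      intro k
      rw [← fh_diff, measure_inter_add_diff _ mSn]
    have hSn_sub : {x : Fin n → ℝ | c ≤ bsum n x} ⊆ hitSet n c := fun x hx => ⟨n, le_rfl, hx⟩
    have hS'_sub : B ∩ {x : Fin n → ℝ | c + 3 * δ ≤ bsum n x} ⊆ hitSet n c := by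
      rintro x ⟨-, hx⟩
      simp only [Set.mem_setOf_eq] at hx
      exact ⟨n, le_rfl, by linarith⟩
    calc ν {x | c ≤ bsum n x} + ν (B ∩ {x | c + 3 * δ ≤ bsum n x})
        = ν (hitSet n c ∩ {x | c ≤ bsum n x})
          + ν (hitSet n c ∩ (B ∩ {x | c + 3 * δ ≤ bsum n x})) := by
          rw [Set.inter_eq_self_of_subset_right hSn_sub,
            Set.inter_eq_self_of_subset_right hS'_sub]
      _ = ∑ k ∈ Finset.range (n + 1), ν (fh n c k ∩ {x | c ≤ bsum n x})
          + ∑ k ∈ Finset.range (n + 1), ν (fh n c k ∩ (B ∩ {x | c + 3 * δ ≤ bsum n x})) := by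
          rw [sum_fh_inter v c mSn, sum_fh_inter v c (mB.inter mS')]
      _ ≤ ∑ k ∈ Finset.range (n + 1), ν (fh n c k ∩ {x | c ≤ bsum n x})
          + ∑ k ∈ Finset.range (n + 1), ν (fh n c k ∩ {x | bsum n x < c}) := by
          refine add_le_add le_rfl (Finset.sum_le_sum fun k hk => ?_)
          exact hk2 k (Nat.lt_succ_iff.1 (Finset.mem_range.1 hk))
      _ = ν (hitSet n c) := by
          rw [e1, ← Finset.sum_add_distrib]
          exact Finset.sum_congr rfl fun k _ => (e2 k).symm
  -- subadditivity step
  have hsub : ν {x | c + 3 * δ ≤ bsum n x}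
      ≤ ν (B ∩ {x | c + 3 * δ ≤ bsum n x}) + ν Bᶜ := by
    refine le_trans (measure_mono ?_) (measure_union_le _ _)
    intro x hx
    by_cases hxB : x ∈ B
    · exact Or.inl ⟨hxB, hx⟩
    · exact Or.inr hxB
  calc ν {x | c + 3 * δ ≤ bsum n x} + ν {x | c ≤ bsum n x}
      ≤ (ν (B ∩ {x | c + 3 * δ ≤ bsum n x}) + ν Bᶜ) + ν {x | c ≤ bsum n x} :=
        add_le_add hsub le_rfl
    _ = (ν {x | c ≤ bsum n x} + ν (B ∩ {x | c + 3 * δ ≤ bsum n x})) + ν Bᶜ := by ring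
    _ ≤ ν (hitSet n c) + ν Bᶜ := add_le_add hmain le_rfl
    _ = ν (hitSet n c) + ν {x | ∃ i, δ < |x i|} := by rw [hBc]

lemma tail_le (n : ℕ) (v : ℝ≥0) (δ : ℝ) :
    gpi n v {x | ∃ i, δ < |x i|} ≤ n * gaussianReal 0 v {u | δ < |u|} := by
  have hU : {x : Fin n → ℝ | ∃ i, δ < |x i|}
      = ⋃ i : Fin n, Function.eval i ⁻¹' {u : ℝ | δ < |u|} := by
    ext x; simp [Function.eval]
  have hm : MeasurableSet {u : ℝ | δ < |u|} :=
    measurableSet_lt measurable_const measurable_abs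
  calc gpi n v {x | ∃ i, δ < |x i|} ≤ ∑ i : Fin n, gpi n v (Function.eval i ⁻¹' {u | δ < |u|}) := by
        rw [hU]; exact measure_iUnion_fintype_le _ _
    _ = ∑ _i : Fin n, gaussianReal 0 v {u | δ < |u|} := by
        exact Finset.sum_congr rfl fun i _ => pi_eval _ i hm
    _ = n * gaussianReal 0 v {u | δ < |u|} := by
        rw [Finset.sum_const, Finset.card_univ, Fintype.card_fin, nsmul_eq_mul]

end RP

namespace RP

variable {Ω : Type*} [MeasurableSpace Ω] {P : Measure Ω} [IsProbabilityMeasure P]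
  {W : ℝ → Ω → ℝ}

lemma incr_law (hW : IsStdBrownianMotion P W) {s u : ℝ} (hs : 0 ≤ s) (hsu : s < u) :
    Measure.map (fun ω => W u ω - W s ω) P = gaussianReal 0 ⟨u - s, by linarith⟩ := by
  have hmeas : Measurable fun ω => W u ω - W s ω := (hW.meas u).sub (hW.meas s)
  haveI : IsProbabilityMeasure (Measure.map (fun ω => W u ω - W s ω) P) :=
    Measure.isProbabilityMeasure_map hmeas.aemeasurable
  set v : ℝ≥0 := ⟨u - s, by linarith⟩ with hv
  have hvne : v ≠ 0 := by
    simp only [hv, ne_eq, ← NNReal.coe_eq_zero, NNReal.coe_mk]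
    intro h; have := congrArg NNReal.toReal h; change u - s = (0:ℝ) at this; linarith
  refine Measure.ext_of_Iic _ _ fun a => ?_
  rw [Measure.map_apply hmeas measurableSet_Iic]
  have h1 : (P ((fun ω => W u ω - W s ω) ⁻¹' Set.Iic a)).toReal
      = ∫ x in Set.Iic a, Real.exp (-(x ^ 2) / (2 * (u - s))) / Real.sqrt (2 * Real.pi * (u - s)) :=
    hW.gaussIncr s u hs hsu a
  have h2 : gaussianReal 0 v (Set.Iic a)
      = ENNReal.ofReal (∫ x in Set.Iic a, gaussianPDFReal 0 v x) :=
    gaussianReal_apply_eq_integral 0 hvne _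
  have hint : ∀ x : ℝ, gaussianPDFReal 0 v x
      = Real.exp (-(x ^ 2) / (2 * (u - s))) / Real.sqrt (2 * Real.pi * (u - s)) := by
    intro x
    simp only [gaussianPDFReal, hv, NNReal.coe_mk, sub_zero]
    rw [inv_mul_eq_div]
    rfl
  have h2' : gaussianReal 0 v (Set.Iic a)
      = ENNReal.ofReal (∫ x in Set.Iic a,
          Real.exp (-(x ^ 2) / (2 * (u - s))) / Real.sqrt (2 * Real.pi * (u - s))) := by
    rw [h2]
    congr 1
    exact setIntegral_congr_fun measurableSet_Iic fun x _ => hint x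
  rw [h2', ← h1, ENNReal.ofReal_toReal (measure_ne_top _ _)]

lemma gauss_atom (v : ℝ≥0) (hv : v ≠ 0) (r : ℝ) : gaussianReal 0 v {r} = 0 :=
  gaussianReal_absolutelyContinuous 0 hv (measure_singleton r)

lemma gauss_Ici_eq_Ioi (v : ℝ≥0) (hv : v ≠ 0) (r : ℝ) :
    gaussianReal 0 v (Set.Ici r) = gaussianReal 0 v (Set.Ioi r) := by
  refine le_antisymm ?_ (measure_mono Set.Ioi_subset_Ici_self)
  calc gaussianReal 0 v (Set.Ici r) = gaussianReal 0 v ({r} ∪ Set.Ioi r) := by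
        congr 1
        ext x
        simp [le_iff_lt_or_eq, or_comm, eq_comm]
    _ ≤ gaussianReal 0 v {r} + gaussianReal 0 v (Set.Ioi r) := measure_union_le _ _
    _ = gaussianReal 0 v (Set.Ioi r) := by rw [gauss_atom v hv r, zero_add]

/-- Gaussian two-sided tail bound. -/
lemma gauss_tail (v : ℝ≥0) (hv : v ≠ 0) {δ : ℝ} (hδ : 0 < δ) :
    gaussianReal 0 v {u : ℝ | δ < |u|}
      ≤ ENNReal.ofReal (2 * Real.exp (-(δ ^ 2) / (4 * v))) := by
  have hv0 : (0 : ℝ) < v := lt_of_le_of_ne v.2 (by exact_mod_cast hv.symm)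
  have hb : (0 : ℝ) < (4 * (v:ℝ))⁻¹ := by positivity
  set g : ℝ → ℝ := fun x =>
    (Real.sqrt (2 * Real.pi * v))⁻¹ * Real.exp (-(δ ^ 2) / (4 * v)) * Real.exp (-(4 * (v:ℝ))⁻¹ * x ^ 2)
    with hg
  have hgint : Integrable g := ((integrable_exp_neg_mul_sq hb).const_mul _)
  have hmono : ∀ x ∈ {u : ℝ | δ < |u|}, gaussianPDFReal 0 v x ≤ g x := by
    intro x hx
    simp only [Set.mem_setOf_eq] at hx
    have hx2 : δ ^ 2 ≤ x ^ 2 := by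
      have := sq_abs x
      nlinarith [abs_nonneg x, hδ.le]
    simp only [gaussianPDFReal, sub_zero, hg]
    conv_rhs => rw [mul_assoc, ← Real.exp_add]
    refine mul_le_mul_of_nonneg_left (Real.exp_le_exp.2 ?_) (by positivity)
    have hi : (2 * (v:ℝ))⁻¹ = 2 * (4 * (v:ℝ))⁻¹ := by
      field_simp
      ring
    rw [div_eq_mul_inv, div_eq_mul_inv, hi]
    nlinarith [mul_le_mul_of_nonneg_right hx2 hb.le]
  have hs : MeasurableSet {u : ℝ | δ < |u|} :=
    measurableSet_lt measurable_const measurable_abs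
  have hintineq : ∫ x in {u : ℝ | δ < |u|}, gaussianPDFReal 0 v x ≤ ∫ x, g x := by
    refine le_trans (setIntegral_mono_on ((integrable_gaussianPDFReal 0 v).restrict)
      hgint.restrict hs hmono) ?_
    exact setIntegral_le_integral hgint (ae_of_all _ fun x => by positivity)
  have hgval : ∫ x, g x ≤ 2 * Real.exp (-(δ ^ 2) / (4 * v)) := by
    rw [hg]
    simp only []
    rw [integral_const_mul, integral_gaussian]
    set S := Real.sqrt (Real.pi * v) with hS
    have hSpos : 0 < S := Real.sqrt_pos.2 (by positivity)
    have h1 : Real.sqrt (Real.pi / (4 * (v:ℝ))⁻¹) = 2 * S := by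
      have hdiv : Real.pi / (4 * (v:ℝ))⁻¹ = 4 * (Real.pi * v) := by
        field_simp
      rw [hdiv, hS,
        Real.sqrt_mul (by norm_num : (0:ℝ) ≤ 4),
        show (4:ℝ) = 2 ^ 2 by norm_num, Real.sqrt_sq (by norm_num : (0:ℝ) ≤ 2)]
    have h2 : Real.sqrt (2 * Real.pi * v) = Real.sqrt 2 * S := by
      rw [hS, mul_assoc, Real.sqrt_mul (by norm_num : (0:ℝ) ≤ 2)]
    rw [h1, h2]
    set E := Real.exp (-(δ ^ 2) / (4 * (v:ℝ))) with hE
    have hEpos : 0 < E := Real.exp_pos _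
    have hs2 : (1:ℝ) ≤ Real.sqrt 2 := by
      rw [show (1:ℝ) = Real.sqrt 1 by simp]
      exact Real.sqrt_le_sqrt (by norm_num)
    have key : (Real.sqrt 2 * S)⁻¹ * E * (2 * S) = 2 / Real.sqrt 2 * E := by
      field_simp
    rw [key]
    refine mul_le_mul_of_nonneg_right ?_ hEpos.le
    exact div_le_self (by norm_num) hs2
  calc gaussianReal 0 v {u : ℝ | δ < |u|}
      = ENNReal.ofReal (∫ x in {u : ℝ | δ < |u|}, gaussianPDFReal 0 v x) :=
        gaussianReal_apply_eq_integral 0 hv _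
    _ ≤ ENNReal.ofReal (2 * Real.exp (-(δ ^ 2) / (4 * v))) :=
        ENNReal.ofReal_le_ofReal (hintineq.trans hgval)

end RP

namespace RP

variable {Ω : Type*} [MeasurableSpace Ω] {P : Measure Ω} [IsProbabilityMeasure P]
  {W : ℝ → Ω → ℝ}

/-- increments over the uniform grid with mesh `h`. -/
def Jmap (W : ℝ → Ω → ℝ) (n : ℕ) (h : ℝ) : Ω → Fin n → ℝ :=
  fun ω i => W (((i : ℕ) + 1 : ℕ) * h) ω - W (((i : ℕ) : ℕ) * h) ω

lemma measurable_Jmap (hW : IsStdBrownianMotion P W) (n : ℕ) (h : ℝ) :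
    Measurable (Jmap W n h) :=
  measurable_pi_lambda _ fun i => (hW.meas _).sub (hW.meas _)

lemma joint_law (hW : IsStdBrownianMotion P W) {t : ℝ} (ht : 0 < t) {n : ℕ} (hn : 0 < n) :
    gpi n ⟨t / n, by positivity⟩ = Measure.map (Jmap W n (t / n)) P := by
  have hh : 0 < t / n := by positivity
  set τ : Fin (n + 1) → ℝ := fun k => ((k : ℕ) : ℝ) * (t / n) with hτ
  have hmono : Monotone τ := by
    intro a b hab
    exact mul_le_mul_of_nonneg_right (by exact_mod_cast (Fin.le_def.1 hab)) hh.le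
  have hnonneg : ∀ k, 0 ≤ τ k := fun k => by positivity
  have hind := hW.indepIncr n τ hmono hnonneg
  rw [iIndepFun_iff_measure_inter_preimage_eq_mul] at hind
  haveI := instIsProbabilityMeasureGaussianReal 0 ⟨t / n, hh.le⟩
  refine Measure.pi_eq fun s hs => ?_
  rw [Measure.map_apply (measurable_Jmap hW n _) (MeasurableSet.univ_pi hs)]
  have hpre : Jmap W n (t / n) ⁻¹' Set.univ.pi s
      = ⋂ i ∈ Finset.univ, (fun ω => W (τ i.succ) ω - W (τ i.castSucc) ω) ⁻¹' s i := by
    ext ω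
    simp only [Set.mem_preimage, Set.mem_pi, Set.mem_univ, true_implies, Set.mem_iInter,
      Finset.mem_univ, Jmap, hτ, Fin.val_succ, Fin.coe_castSucc]
  rw [hpre, hind Finset.univ (fun i _ => hs i)]
  refine Finset.prod_congr rfl fun i _ => ?_
  have h0 : 0 ≤ τ i.castSucc := hnonneg _
  have hlt : τ i.castSucc < τ i.succ := by
    simp only [hτ, Fin.val_succ, Fin.coe_castSucc]
    push_cast
    nlinarith [hh]
  have hlaw := incr_law hW h0 hlt
  refine (Measure.map_apply ((hW.meas _).sub (hW.meas _)) (hs i)).symm.trans ?_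
  refine (congrArg (fun μ => μ (s i)) hlaw).trans ?_
  congr 1
  ext
  simp only [NNReal.coe_mk, hτ, Fin.val_succ, Fin.coe_castSucc]
  push_cast
  try ring

lemma bsum_Jmap {n : ℕ} (h : ℝ) (ω : Ω) {k : ℕ} (hk : k ≤ n) :
    bsum k (Jmap W n h ω) = W ((k : ℝ) * h) ω - W 0 ω := by
  induction k with
  | zero => simp [bsum_zero]
  | succ k ih =>
    have hkn : k < n := Nat.lt_of_succ_le hk
    rw [bsum_succ hkn, ih (Nat.le_of_lt hkn)]
    simp only [Jmap]
    push_cast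
    ring

lemma pull_hit (hW : IsStdBrownianMotion P W) {t : ℝ} (ht : 0 < t) {n : ℕ} (hn : 0 < n) (c : ℝ) :
    Jmap W n (t / n) ⁻¹' (hitSet n c)
      = {ω | ∃ k ≤ n, c ≤ W ((k : ℝ) * (t / n)) ω - W 0 ω} := by
  ext ω
  simp only [Set.mem_preimage, hitSet, Set.mem_setOf_eq]
  refine exists_congr fun k => ?_
  constructor
  · rintro ⟨hk, hc⟩
    exact ⟨hk, by rwa [bsum_Jmap _ _ hk] at hc⟩
  · rintro ⟨hk, hc⟩
    exact ⟨hk, by rwa [bsum_Jmap _ _ hk]⟩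

lemma pull_level (hW : IsStdBrownianMotion P W) {t : ℝ} (ht : 0 < t) {n : ℕ} (hn : 0 < n)
    (r : ℝ) :
    Jmap W n (t / n) ⁻¹' {x | r ≤ bsum n x} = {ω | r ≤ W t ω - W 0 ω} := by
  have hnt : (n : ℝ) * (t / n) = t := by
    field_simp
  ext ω
  simp only [Set.mem_preimage, Set.mem_setOf_eq, bsum_Jmap (t / n) ω (le_refl n), hnt]

lemma P_pull (hW : IsStdBrownianMotion P W) {t : ℝ} (ht : 0 < t) {n : ℕ} (hn : 0 < n)
    {C : Set (Fin n → ℝ)} (hC : MeasurableSet C) :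
    P (Jmap W n (t / n) ⁻¹' C) = gpi n ⟨t / n, by positivity⟩ C := by
  rw [joint_law hW ht hn, Measure.map_apply (measurable_Jmap hW n _) hC]

/-- Discrete upper bound, on `Ω`. -/
lemma upper_O (hW : IsStdBrownianMotion P W) {t : ℝ} (ht : 0 < t) {n : ℕ} (hn : 0 < n)
    {c : ℝ} (hc : 0 < c) :
    P {ω | ∃ k ≤ n, c ≤ W ((k : ℝ) * (t / n)) ω - W 0 ω}
      ≤ 2 * P {ω | c ≤ W t ω - W 0 ω} := by
  rw [← pull_hit hW ht hn c, ← pull_level hW ht hn c,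
    P_pull hW ht hn (measurable_hitSet n c), P_pull hW ht hn (measurable_levelSet n c)]
  exact discrete_upper n _ hc

/-- Discrete lower bound, on `Ω`. -/
lemma lower_O (hW : IsStdBrownianMotion P W) {t : ℝ} (ht : 0 < t) {n : ℕ} (hn : 0 < n)
    {c δ : ℝ} (hc : 0 < c) (hδ : 0 < δ) :
    P {ω | c + 3 * δ ≤ W t ω - W 0 ω} + P {ω | c ≤ W t ω - W 0 ω}
      ≤ P {ω | ∃ k ≤ n, c ≤ W ((k : ℝ) * (t / n)) ω - W 0 ω}
        + n * ENNReal.ofReal (2 * Real.exp (-(δ ^ 2) / (4 * (t / n)))) := by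
  have hn' : (0:ℝ) < n := by exact_mod_cast hn
  have hvpos : (0:ℝ) < t / n := div_pos ht hn'
  have hvne : (⟨t / n, by positivity⟩ : ℝ≥0) ≠ 0 := by
    simp only [ne_eq, ← NNReal.coe_eq_zero, NNReal.coe_mk]
    exact ne_of_gt hvpos
  calc P {ω | c + 3 * δ ≤ W t ω - W 0 ω} + P {ω | c ≤ W t ω - W 0 ω}
      = gpi n ⟨t / n, by positivity⟩ {x | c + 3 * δ ≤ bsum n x}
        + gpi n ⟨t / n, by positivity⟩ {x | c ≤ bsum n x} := by
        rw [← pull_level hW ht hn (c + 3 * δ), ← pull_level hW ht hn c,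
          P_pull hW ht hn (measurable_levelSet n _), P_pull hW ht hn (measurable_levelSet n c)]
    _ ≤ gpi n ⟨t / n, by positivity⟩ (hitSet n c)
        + gpi n ⟨t / n, by positivity⟩ {x | ∃ i, δ < |x i|} := discrete_lower n _ hc hδ
    _ ≤ P {ω | ∃ k ≤ n, c ≤ W ((k : ℝ) * (t / n)) ω - W 0 ω}
        + n * ENNReal.ofReal (2 * Real.exp (-(δ ^ 2) / (4 * (t / n)))) := by
        refine add_le_add ?_ ?_
        · rw [← pull_hit hW ht hn c, P_pull hW ht hn (measurable_hitSet n c)]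
        · refine le_trans (tail_le n _ δ) ?_
          refine mul_le_mul_right ?_ _
          exact le_trans (gauss_tail _ hvne hδ) (le_of_eq rfl)

end RP

namespace RP
open Filter Topology

lemma real_err_tendsto {a : ℝ} (ha : 0 < a) :
    Tendsto (fun m : ℕ => ((2 ^ m : ℕ) : ℝ) * (2 * Real.exp (-(a * (2 ^ m : ℕ))))) atTop (𝓝 0) := by
  have h2 : Tendsto (fun m : ℕ => ((2 ^ m : ℕ) : ℝ)) atTop atTop := by
    have : Tendsto (fun m : ℕ => (2 : ℝ) ^ m) atTop atTop :=
      tendsto_pow_atTop_atTop_of_one_lt one_lt_two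
    simpa using this
  have hy : Tendsto (fun y : ℝ => y * (2 * Real.exp (-(a * y)))) atTop (𝓝 0) := by
    have h1 : Tendsto (fun z : ℝ => z ^ 1 * Real.exp (-z)) atTop (𝓝 0) :=
      tendsto_pow_mul_exp_neg_atTop_nhds_zero 1
    have hmul : Tendsto (fun y : ℝ => a * y) atTop atTop :=
      Tendsto.const_mul_atTop ha tendsto_id
    have hcomp : Tendsto (fun y : ℝ => (a * y) * Real.exp (-(a * y))) atTop (𝓝 0) := by
      have := h1.comp hmul
      simpa [Function.comp_def] using this
    have := hcomp.const_mul (2 / a)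
    rw [mul_zero] at this
    refine this.congr fun y => ?_
    field_simp
  exact hy.comp h2

lemma err_tendsto {t δ : ℝ} (ht : 0 < t) (hδ : 0 < δ) :
    Tendsto (fun m : ℕ =>
        ((2 ^ m : ℕ) : ℝ≥0∞) * ENNReal.ofReal (2 * Real.exp (-(δ ^ 2) / (4 * (t / (2 ^ m : ℕ))))))
      atTop (𝓝 0) := by
  have ha : 0 < δ ^ 2 / (4 * t) := by positivity
  have key : ∀ m : ℕ, ((2 ^ m : ℕ) : ℝ≥0∞) * ENNReal.ofReal
        (2 * Real.exp (-(δ ^ 2) / (4 * (t / (2 ^ m : ℕ)))))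
      = ENNReal.ofReal (((2 ^ m : ℕ) : ℝ) * (2 * Real.exp (-(δ ^ 2 / (4 * t) * (2 ^ m : ℕ))))) := by
    intro m
    have h2m : (0:ℝ) < (2 ^ m : ℕ) := by positivity
    have hexp : -(δ ^ 2) / (4 * (t / (2 ^ m : ℕ))) = -(δ ^ 2 / (4 * t) * (2 ^ m : ℕ)) := by
      field_simp
      try ring
    rw [hexp, ← ENNReal.ofReal_natCast (2 ^ m), ← ENNReal.ofReal_mul (by positivity)]
  simp only [key]
  have := (real_err_tendsto ha)
  have h0 : (0 : ℝ≥0∞) = ENNReal.ofReal 0 := by simp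
  rw [h0]
  exact (ENNReal.continuous_ofReal.tendsto 0).comp this

end RP

namespace RP
open Filter Topology

variable {Ω : Type*} [MeasurableSpace Ω] {P : Measure Ω} [IsProbabilityMeasure P]
  {W : ℝ → Ω → ℝ}

lemma strip (hW : IsStdBrownianMotion P W) {S T : Set Ω}
    (h : ∀ ω, W 0 ω = 0 → (ω ∈ S ↔ ω ∈ T)) : P S = P T := by
  apply measure_congr
  filter_upwards [hW.start] with ω h0
  exact eq_iff_iff.2 (h ω h0)

lemma level_eq (hW : IsStdBrownianMotion P W) {t : ℝ} (ht : 0 < t) (r : ℝ) :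
    P {ω | r ≤ W t ω - W 0 ω} = gaussianReal 0 ⟨t, ht.le⟩ (Set.Ici r) := by
  have hmeas : Measurable fun ω => W t ω - W 0 ω := (hW.meas t).sub (hW.meas 0)
  have h1 : P {ω | r ≤ W t ω - W 0 ω}
      = Measure.map (fun ω => W t ω - W 0 ω) P (Set.Ici r) :=
    (Measure.map_apply hmeas measurableSet_Ici).symm
  rw [h1, incr_law hW le_rfl ht]
  congr 1
  ext
  simp

lemma level_eq' (hW : IsStdBrownianMotion P W) {t : ℝ} (ht : 0 < t) (r : ℝ) :
    P {ω | r ≤ W t ω} = gaussianReal 0 ⟨t, ht.le⟩ (Set.Ici r) := by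
  rw [← level_eq hW ht r]
  refine strip hW fun ω h0 => ?_
  simp [h0]

/-- the set of paths hitting level `c` on the `2 ^ m`-point grid over `[0, t]`. -/
def Egrid (W : ℝ → Ω → ℝ) (t : ℝ) (m : ℕ) (c : ℝ) : Set Ω :=
  {ω | ∃ k : ℕ, k ≤ 2 ^ m ∧ c ≤ W ((k : ℝ) * (t / ((2 : ℕ) ^ m : ℕ))) ω}

lemma measurable_Egrid (hW : IsStdBrownianMotion P W) (t : ℝ) (m : ℕ) (c : ℝ) :
    MeasurableSet (Egrid W t m c) := by
  have : Egrid W t m c = ⋃ (k : ℕ) (_ : k ≤ 2 ^ m),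
      (W ((k : ℝ) * (t / ((2 : ℕ) ^ m : ℕ)))) ⁻¹' Set.Ici c := by
    ext ω; simp [Egrid]
  rw [this]
  exact MeasurableSet.iUnion fun k => MeasurableSet.iUnion fun _ =>
    (hW.meas _) measurableSet_Ici

lemma Egrid_mono (W : ℝ → Ω → ℝ) {t : ℝ} (ht : 0 < t) (c : ℝ) :
    Monotone fun m => Egrid W t m c := by
  refine monotone_nat_of_le_succ fun m ω hω => ?_
  obtain ⟨k, hk, hc⟩ := hω
  refine ⟨2 * k, by rw [pow_succ]; omega, ?_⟩
  have harg : ((2 * k : ℕ) : ℝ) * (t / ((2 : ℕ) ^ (m + 1) : ℕ))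
      = (k : ℝ) * (t / ((2 : ℕ) ^ m : ℕ)) := by
    have h2 : ((2 : ℕ) ^ m : ℝ) ≠ 0 := by positivity
    have h2' : ((2 : ℕ) ^ (m+1) : ℝ) ≠ 0 := by positivity
    push_cast at h2 h2' ⊢
    field_simp
    ring
  rwa [harg]

lemma upper_E (hW : IsStdBrownianMotion P W) {t : ℝ} (ht : 0 < t) {c : ℝ} (hc : 0 < c)
    (m : ℕ) :
    P (Egrid W t m c) ≤ 2 * gaussianReal 0 ⟨t, ht.le⟩ (Set.Ici c) := by
  have hEs : P (Egrid W t m c)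
      = P {ω | ∃ k : ℕ, k ≤ 2 ^ m ∧ c ≤ W ((k : ℝ) * (t / ((2:ℕ) ^ m : ℕ))) ω - W 0 ω} := by
    refine strip hW fun ω h0 => ?_
    simp only [Egrid, Set.mem_setOf_eq, h0, sub_zero]
  rw [hEs, ← level_eq hW ht c]
  exact upper_O hW ht (pow_pos (by norm_num : (0:ℕ) < 2) m) hc

lemma lower_E (hW : IsStdBrownianMotion P W) {t : ℝ} (ht : 0 < t) {c δ : ℝ} (hc : 0 < c)
    (hδ : 0 < δ) (m : ℕ) :
    gaussianReal 0 ⟨t, ht.le⟩ (Set.Ici (c + 3 * δ)) + gaussianReal 0 ⟨t, ht.le⟩ (Set.Ici c)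
      ≤ P (Egrid W t m c)
        + ((2 ^ m : ℕ) : ℝ≥0∞) * ENNReal.ofReal
            (2 * Real.exp (-(δ ^ 2) / (4 * (t / ((2:ℕ) ^ m : ℕ))))) := by
  have hEs : P (Egrid W t m c)
      = P {ω | ∃ k : ℕ, k ≤ 2 ^ m ∧ c ≤ W ((k : ℝ) * (t / ((2:ℕ) ^ m : ℕ))) ω - W 0 ω} := by
    refine strip hW fun ω h0 => ?_
    simp only [Egrid, Set.mem_setOf_eq, h0, sub_zero]
  rw [hEs, ← level_eq hW ht c, ← level_eq hW ht (c + 3 * δ)]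
  exact lower_O hW ht (pow_pos (by norm_num : (0:ℕ) < 2) m) hc hδ

lemma iUnion_Ici_eq_Ioi {c : ℝ} :
    ⋃ l : ℕ, Set.Ici (c + 3 * (1 / ((l : ℝ) + 1))) = Set.Ioi c := by
  ext x
  simp only [Set.mem_iUnion, Set.mem_Ici, Set.mem_Ioi]
  constructor
  · rintro ⟨l, hl⟩
    have : 0 < 3 * (1 / ((l : ℝ) + 1)) := by positivity
    linarith
  · intro hx
    obtain ⟨l, hl⟩ := exists_nat_gt (3 / (x - c))
    refine ⟨l, ?_⟩
    have hxc : 0 < x - c := by linarith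
    have hl1 : 3 / (x - c) < (l : ℝ) + 1 := by
      have : (0:ℝ) ≤ l := Nat.cast_nonneg l
      linarith
    have h3 : 3 * (1 / ((l : ℝ) + 1)) < x - c := by
      rw [div_lt_iff₀ hxc] at hl1
      rw [mul_one_div, div_lt_iff₀ (by positivity)]
      linarith
    linarith

lemma q_right_tendsto {v : ℝ≥0} (hv : v ≠ 0) (c : ℝ) :
    Tendsto (fun l : ℕ => gaussianReal 0 v (Set.Ici (c + 3 * (1 / ((l : ℝ) + 1)))))
      atTop (𝓝 (gaussianReal 0 v (Set.Ici c))) := by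
  have hmono : Monotone fun l : ℕ => Set.Ici (c + 3 * (1 / ((l : ℝ) + 1))) := by
    intro a b hab
    refine Set.Ici_subset_Ici.2 ?_
    have : (1 : ℝ) / ((b : ℝ) + 1) ≤ 1 / ((a : ℝ) + 1) := by
      apply one_div_le_one_div_of_le (by positivity)
      exact_mod_cast add_le_add_left (Nat.cast_le.2 hab) 1
    linarith
  have := tendsto_measure_iUnion_atTop (μ := gaussianReal 0 v) hmono
  rw [iUnion_Ici_eq_Ioi, ← gauss_Ici_eq_Ioi v hv c] at this
  exact this

/-- limit identity for the dyadic grid events -/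
lemma PG_eq (hW : IsStdBrownianMotion P W) {t : ℝ} (ht : 0 < t) {c : ℝ} (hc : 0 < c) :
    P (⋃ m : ℕ, Egrid W t m c) = 2 * gaussianReal 0 ⟨t, ht.le⟩ (Set.Ici c) := by
  have hvne : (⟨t, ht.le⟩ : ℝ≥0) ≠ 0 := by
    simp only [ne_eq, ← NNReal.coe_eq_zero, NNReal.coe_mk]
    exact ne_of_gt ht
  set q : ℝ → ℝ≥0∞ := fun r => gaussianReal 0 ⟨t, ht.le⟩ (Set.Ici r) with hq
  have htend : Tendsto (fun m => P (Egrid W t m c)) atTop (𝓝 (P (⋃ m, Egrid W t m c))) :=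
    tendsto_measure_iUnion_atTop (Egrid_mono W ht c)
  refine le_antisymm ?_ ?_
  · exact le_of_tendsto htend (Eventually.of_forall fun m => upper_E hW ht hc m)
  · -- lower bound
    have hstep : ∀ δ : ℝ, 0 < δ → q (c + 3 * δ) + q c ≤ P (⋃ m, Egrid W t m c) := by
      intro δ hδ
      have herr := err_tendsto ht hδ
      have hlim : Tendsto (fun m : ℕ => P (⋃ m, Egrid W t m c)
          + ((2 ^ m : ℕ) : ℝ≥0∞) * ENNReal.ofReal
              (2 * Real.exp (-(δ ^ 2) / (4 * (t / ((2:ℕ) ^ m : ℕ)))))) atTop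
          (𝓝 (P (⋃ m, Egrid W t m c))) := by
        have := (tendsto_const_nhds (x := P (⋃ m, Egrid W t m c)) (f := atTop (α := ℕ))).add herr
        rwa [add_zero] at this
      refine ge_of_tendsto hlim (Eventually.of_forall fun m => ?_)
      refine le_trans (lower_E hW ht hc hδ m) ?_
      exact add_le_add (measure_mono (Set.subset_iUnion (fun i => Egrid W t i c) m)) le_rfl
    have hq3 : Tendsto (fun l : ℕ => q (c + 3 * (1 / ((l : ℝ) + 1))) + q c) atTop
        (𝓝 (q c + q c)) := (q_right_tendsto hvne c).add tendsto_const_nhds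
    have h2q : q c + q c = 2 * q c := by rw [two_mul]
    rw [← h2q]
    exact le_of_tendsto hq3 (Eventually.of_forall fun l => hstep _ (by positivity))

end RP

namespace RP
open Filter Topology

variable {Ω : Type*} [MeasurableSpace Ω] {P : Measure Ω} [IsProbabilityMeasure P]
  {W : ℝ → Ω → ℝ}

lemma exists_grid_near {t : ℝ} (ht : 0 < t) {s ε : ℝ} (hs : s ∈ Set.Icc 0 t) (hε : 0 < ε) :
    ∃ m k : ℕ, k ≤ 2 ^ m ∧ |(k : ℝ) * (t / ((2:ℕ) ^ m : ℕ)) - s| < ε := by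
  obtain ⟨m, hm⟩ := pow_unbounded_of_one_lt (t / ε) (one_lt_two (α := ℝ))
  set N : ℝ := (((2:ℕ) ^ m : ℕ) : ℝ) with hN
  have hNpos : (0:ℝ) < N := by rw [hN]; positivity
  have hN2 : N = (2:ℝ) ^ m := by rw [hN]; push_cast; ring
  have hs0 := hs.1
  have hst := hs.2
  set r : ℝ := t / N with hr
  have hrpos : 0 < r := by rw [hr]; positivity
  have htr : t = r * N := by rw [hr]; field_simp
  have hmesh : r < ε := by
    rw [div_lt_iff₀ hε] at hm
    rw [hr, div_lt_iff₀ hNpos, hN2]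
    nlinarith
  set k : ℕ := ⌊s * N / t⌋₊ with hk
  have hfl : (k : ℝ) ≤ s * N / t := Nat.floor_le (by positivity)
  have hfl2 : s * N / t < (k : ℝ) + 1 := Nat.lt_floor_add_one _
  have h1 : (k : ℝ) * t ≤ s * N := (le_div_iff₀ ht).1 hfl
  have h2 : s * N < ((k : ℝ) + 1) * t := (div_lt_iff₀ ht).1 hfl2
  have h1' : (k : ℝ) * r ≤ s := by nlinarith
  have h2' : s < ((k : ℝ) + 1) * r := by nlinarith
  have hkN : k ≤ 2 ^ m := by
    have hcast : (k : ℝ) ≤ ((2 ^ m : ℕ) : ℝ) := by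
      rw [← hN]
      nlinarith
    exact_mod_cast hcast
  exact ⟨m, k, hkN, by rw [abs_lt]; constructor <;> nlinarith⟩

lemma grid_mem_Icc {t : ℝ} (ht : 0 < t) {m k : ℕ} (hk : k ≤ 2 ^ m) :
    (k : ℝ) * (t / ((2:ℕ) ^ m : ℕ)) ∈ Set.Icc 0 t := by
  have hNpos : (0:ℝ) < ((2:ℕ) ^ m : ℕ) := by positivity
  constructor
  · positivity
  · have hkr : (k : ℝ) ≤ (((2:ℕ) ^ m : ℕ) : ℝ) := by exact_mod_cast hk
    calc (k : ℝ) * (t / ((2:ℕ) ^ m : ℕ)) ≤ (((2:ℕ) ^ m : ℕ) : ℝ) * (t / ((2:ℕ) ^ m : ℕ)) :=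
          mul_le_mul_of_nonneg_right hkr (by positivity)
      _ = t := by field_simp

lemma mem_Egrid_of_hit {ω : Ω} (hcont : Continuous fun u => W u ω) {t d : ℝ} (ht : 0 < t)
    (hA : ∃ s ∈ Set.Icc (0:ℝ) t, d ≤ W s ω) {c : ℝ} (hcd : c < d) :
    ∃ m, ω ∈ Egrid W t m c := by
  obtain ⟨s, hs, hWs⟩ := hA
  have hgap : 0 < W s ω - c := by linarith
  have hca : ContinuousAt (fun u => W u ω) s := hcont.continuousAt
  rw [Metric.continuousAt_iff] at hca
  obtain ⟨ε, hε, hball⟩ := hca _ hgap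
  obtain ⟨m, k, hk, hnear⟩ := exists_grid_near ht hs hε
  refine ⟨m, k, hk, ?_⟩
  have := hball (show dist ((k : ℝ) * (t / ((2:ℕ) ^ m : ℕ))) s < ε by rwa [Real.dist_eq])
  rw [Real.dist_eq, abs_lt] at this
  linarith [this.1]

lemma hit_of_mem_all {ω : Ω} (hcont : Continuous fun u => W u ω) {t d : ℝ} (ht : 0 < t)
    {c : ℕ → ℝ} (hctend : Tendsto c atTop (𝓝 d))
    (h : ∀ j, ∃ m, ω ∈ Egrid W t m (c j)) :
    ∃ s ∈ Set.Icc (0:ℝ) t, d ≤ W s ω := by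
  have hpt : ∀ j, ∃ s ∈ Set.Icc (0:ℝ) t, c j ≤ W s ω := by
    intro j
    obtain ⟨m, k, hk, hc⟩ := h j
    exact ⟨_, grid_mem_Icc ht hk, hc⟩
  choose s hsmem hsle using hpt
  obtain ⟨x, hx, φ, hφ, hconv⟩ := (isCompact_Icc (a := (0:ℝ)) (b := t)).tendsto_subseq hsmem
  refine ⟨x, hx, ?_⟩
  have hWconv : Tendsto (fun i => W (s (φ i)) ω) atTop (𝓝 (W x ω)) :=
    (hcont.tendsto x).comp hconv
  have hcconv : Tendsto (fun i => c (φ i)) atTop (𝓝 d) :=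
    hctend.comp hφ.tendsto_atTop
  exact le_of_tendsto_of_tendsto' hcconv hWconv fun i => hsle (φ i)

end RP

open Filter Topology


/-- The reflection principle: for a standard one-dimensional Brownian motion started
at `0` and any `d > 0`, `t > 0`, the probability that the path reaches level `d`
by time `t` equals twice the probability that `W t ≥ d`. -/
theorem reflection_principle {Ω : Type*} [MeasurableSpace Ω] (P : Measure Ω)
    [IsProbabilityMeasure P] (W : ℝ → Ω → ℝ) (hW : IsStdBrownianMotion P W)
    (d t : ℝ) (hd : 0 < d) (ht : 0 < t) :
    P {ω | ∃ s ∈ Set.Icc (0 : ℝ) t, W s ω ≥ d} = 2 * P {ω | W t ω ≥ d} := by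
  set c : ℕ → ℝ := fun j => d - d / ((j : ℝ) + 2) with hc
  have hc0 : ∀ j, 0 < c j := by
    intro j
    have hj : (0:ℝ) ≤ (j : ℝ) := Nat.cast_nonneg j
    have h1 : d / ((j : ℝ) + 2) < d := div_lt_self hd (by linarith)
    simp only [hc]
    linarith
  have hcd : ∀ j, c j < d := by
    intro j
    have hj : (0:ℝ) ≤ (j : ℝ) := Nat.cast_nonneg j
    have : 0 < d / ((j : ℝ) + 2) := by positivity
    simp only [hc]
    linarith
  have hcmono : Monotone c := by
    intro a b hab
    have hj : (0:ℝ) ≤ (a : ℝ) := Nat.cast_nonneg a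
    have hab' : ((a : ℝ) + 2) ≤ ((b : ℝ) + 2) := by
      have : (a:ℝ) ≤ b := Nat.cast_le.2 hab
      linarith
    have := div_le_div_of_nonneg_left hd.le (by linarith : (0:ℝ) < (a:ℝ) + 2) hab'
    simp only [hc]
    linarith
  have hctend : Tendsto c atTop (𝓝 d) := by
    have h2 : Tendsto (fun j : ℕ => ((j : ℝ) + 2)) atTop atTop :=
      tendsto_atTop_add_const_right _ 2 tendsto_natCast_atTop_atTop
    have h3 : Tendsto (fun j : ℕ => d / ((j : ℝ) + 2)) atTop (𝓝 0) :=
      Tendsto.div_atTop tendsto_const_nhds h2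
    have := (tendsto_const_nhds (x := d) (f := atTop (α := ℕ))).sub h3
    rwa [sub_zero] at this
  set G : ℕ → Set Ω := fun j => ⋃ m, RP.Egrid W t m (c j) with hG
  have hGmeas : ∀ j, MeasurableSet (G j) := fun j =>
    MeasurableSet.iUnion fun m => RP.measurable_Egrid hW t m (c j)
  have hGanti : Antitone G := by
    intro a b hab
    refine Set.iUnion_mono fun m => ?_
    rintro ω ⟨k, hk, hle⟩
    exact ⟨k, hk, le_trans (hcmono hab) hle⟩
  have hPG : ∀ j, P (G j) = 2 * gaussianReal 0 ⟨t, ht.le⟩ (Set.Ici (c j)) := fun j =>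
    RP.PG_eq hW ht (hc0 j)
  have hae : P {ω | ∃ s ∈ Set.Icc (0 : ℝ) t, W s ω ≥ d} = P (⋂ j, G j) := by
    apply measure_congr
    filter_upwards [hW.cont] with ω hcont
    apply eq_iff_iff.2
    constructor
    · intro hA
      refine Set.mem_iInter.2 fun j => ?_
      obtain ⟨m, hm⟩ := RP.mem_Egrid_of_hit hcont ht hA (hcd j)
      exact Set.mem_iUnion.2 ⟨m, hm⟩
    · intro hI
      exact RP.hit_of_mem_all hcont ht hctend fun j =>
        Set.mem_iUnion.1 (Set.mem_iInter.1 hI j)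
  have hlim1 : Tendsto (fun j => P (G j)) atTop (𝓝 (P (⋂ j, G j))) :=
    tendsto_measure_iInter_atTop (fun j => (hGmeas j).nullMeasurableSet) hGanti
      ⟨0, measure_ne_top P _⟩
  have hIci : Tendsto (fun j => gaussianReal 0 ⟨t, ht.le⟩ (Set.Ici (c j))) atTop
      (𝓝 (gaussianReal 0 ⟨t, ht.le⟩ (Set.Ici d))) := by
    have hint : ⋂ j, Set.Ici (c j) = Set.Ici d := by
      ext x
      simp only [Set.mem_iInter, Set.mem_Ici]
      constructor
      · intro h
        exact le_of_tendsto hctend (Eventually.of_forall h)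
      · intro h j
        linarith [hcd j]
    haveI := instIsProbabilityMeasureGaussianReal 0 ⟨t, ht.le⟩
    have := tendsto_measure_iInter_atTop (μ := gaussianReal 0 ⟨t, ht.le⟩)
      (fun j => measurableSet_Ici.nullMeasurableSet)
      (fun a b hab => Set.Ici_subset_Ici.2 (hcmono hab)) ⟨0, measure_ne_top _ _⟩
    rwa [hint] at this
  have hlim2 : Tendsto (fun j => P (G j)) atTop
      (𝓝 (2 * gaussianReal 0 ⟨t, ht.le⟩ (Set.Ici d))) := by
    simp only [hPG]
    exact ENNReal.Tendsto.const_mul hIci (Or.inr ENNReal.ofNat_ne_top)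
  have hfinal : P (⋂ j, G j) = 2 * gaussianReal 0 ⟨t, ht.le⟩ (Set.Ici d) :=
    tendsto_nhds_unique hlim1 hlim2
  have hRHS : P {ω | W t ω ≥ d} = gaussianReal 0 ⟨t, ht.le⟩ (Set.Ici d) :=
    RP.level_eq' hW ht d
  rw [hae, hfinal, hRHS]
end

section
/- Hoeffding's inequality: if X₁, …, X_m are independent random variables taking values in [0,1] and X̄ = (1/m)(X₁ + ⋯ + X_m), then for all ξ > 0, P(X̄ − E[X̄] ≥ ξ) ≤ e^{−2mξ²}. -/
open MeasureTheory ProbabilityTheory Real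

/-- The key scalar inequality behind Hoeffding's lemma. -/
lemma hoeffding_key (p : ℝ) (hp0 : 0 ≤ p) (hp1 : p ≤ 1) (h : ℝ) :
    (1 - p) + p * Real.exp h ≤ Real.exp (p * h + h ^ 2 / 8) := by
  set D : ℝ → ℝ := fun x => (1 - p) + p * Real.exp x with hDdef
  have hD : ∀ x, 0 < D x := by
    intro x
    rcases eq_or_lt_of_le hp0 with h0 | h0
    · simp [hDdef, ← h0]
    · have := Real.exp_pos x
      have := mul_pos h0 (Real.exp_pos x)
      simp only [hDdef]
      nlinarith
  have hDderiv : ∀ x, HasDerivAt D (p * Real.exp x) x := by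
    intro x
    exact ((Real.hasDerivAt_exp x).const_mul p).const_add (1 - p)
  set G : ℝ → ℝ := fun x => p + x / 4 - p * Real.exp x / D x with hGdef
  set F : ℝ → ℝ := fun x => p * x + x ^ 2 / 8 - Real.log (D x) with hFdef
  have hFderiv : ∀ x, HasDerivAt F (G x) x := by
    intro x
    have h1 : HasDerivAt (fun x : ℝ => p * x + x ^ 2 / 8) (p + 2 * x / 8) x := by
      have := ((hasDerivAt_pow 2 x).div_const 8).const_add (0:ℝ)
      have h2 : HasDerivAt (fun x : ℝ => p * x) p x := by
        simpa using (hasDerivAt_id x).const_mul p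
      have h5 : HasDerivAt (fun x : ℝ => p * x + x ^ 2 / 8) (p + ((2:ℕ):ℝ) * x ^ (2 - 1) / 8) x :=
        h2.add ((hasDerivAt_pow 2 x).div_const 8)
      convert h5 using 1; norm_num
    have h3 : HasDerivAt (fun x => Real.log (D x)) (p * Real.exp x / D x) x :=
      (hDderiv x).log (hD x).ne'
    have : HasDerivAt F (p + 2 * x / 8 - p * Real.exp x / D x) x := h1.sub h3
    convert this using 1
    show p + x / 4 - p * Real.exp x / D x = p + 2 * x / 8 - p * Real.exp x / D x; ring
  have hGderiv : ∀ x, HasDerivAt G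
      (1 / 4 - (p * Real.exp x * D x - p * Real.exp x * (p * Real.exp x)) / D x ^ 2) x := by
    intro x
    have hnum : HasDerivAt (fun x => p * Real.exp x) (p * Real.exp x) x :=
      (Real.hasDerivAt_exp x).const_mul p
    have hdiv := hnum.div (hDderiv x) (hD x).ne'
    have hlin : HasDerivAt (fun x : ℝ => p + x / 4) (1 / 4) x := by
      simpa using ((hasDerivAt_id x).div_const 4).const_add p
    exact hlin.sub hdiv
  have hG'nonneg : ∀ x, 0 ≤ 1 / 4 -
      (p * Real.exp x * D x - p * Real.exp x * (p * Real.exp x)) / D x ^ 2 := by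
    intro x
    rw [sub_nonneg, div_le_iff₀ (pow_pos (hD x) 2)]
    simp only [hDdef]
    nlinarith [sq_nonneg (1 - p - p * Real.exp x), sq_nonneg (p * Real.exp x)]
  have hGmono : Monotone G :=
    monotone_of_deriv_nonneg (fun x => (hGderiv x).differentiableAt)
      (fun x => by rw [(hGderiv x).deriv]; exact hG'nonneg x)
  have hG0 : G 0 = 0 := by simp [hGdef, hDdef]
  have hF0 : F 0 = 0 := by simp [hFdef, hDdef]
  have hFdiff : Differentiable ℝ F := fun x => (hFderiv x).differentiableAt
  have hFnonneg : ∀ x, 0 ≤ F x := by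
    intro x
    rcases le_or_gt 0 x with hx | hx
    · have hmono : MonotoneOn F (Set.Ici 0) := by
        refine monotoneOn_of_deriv_nonneg (convex_Ici 0) hFdiff.continuous.continuousOn
          hFdiff.differentiableOn ?_
        intro y hy
        rw [(hFderiv y).deriv]
        rw [interior_Ici] at hy
        calc (0:ℝ) = G 0 := hG0.symm
        _ ≤ G y := hGmono (le_of_lt hy)
      calc (0:ℝ) = F 0 := hF0.symm
      _ ≤ F x := hmono (by simp) hx hx
    · have hanti : AntitoneOn F (Set.Iic 0) := by
        refine antitoneOn_of_deriv_nonpos (convex_Iic 0) hFdiff.continuous.continuousOn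
          hFdiff.differentiableOn ?_
        intro y hy
        rw [(hFderiv y).deriv]
        rw [interior_Iic] at hy
        calc G y ≤ G 0 := hGmono (le_of_lt hy)
        _ = 0 := hG0
      calc (0:ℝ) = F 0 := hF0.symm
      _ ≤ F x := hanti hx.le (by simp) hx.le
  have := hFnonneg h
  have hlog : Real.log (D h) ≤ p * h + h ^ 2 / 8 := by
    simp only [hFdef] at this; linarith
  have := (Real.log_le_iff_le_exp (hD h)).mp hlog
  simpa [hDdef] using this



section Aux

variable {Ω : Type*} [MeasurableSpace Ω] (P : Measure Ω) [IsProbabilityMeasure P]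
  {Y : Ω → ℝ} (hYmeas : Measurable Y) (hYbdd : ∀ᵐ ω ∂P, Y ω ∈ Set.Icc (0 : ℝ) 1)

include hYmeas hYbdd

lemma aux_int (t : ℝ) : Integrable (fun ω => Real.exp (t * Y ω)) P := by
  refine Integrable.mono' (integrable_const (Real.exp |t|))
    ((hYmeas.const_mul t).exp.aestronglyMeasurable) ?_
  filter_upwards [hYbdd] with ω hω
  rw [Real.norm_eq_abs, abs_of_pos (Real.exp_pos _), Real.exp_le_exp]
  calc t * Y ω ≤ |t * Y ω| := le_abs_self _
  _ = |t| * |Y ω| := abs_mul _ _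
  _ ≤ |t| * 1 := by
      refine mul_le_mul_of_nonneg_left ?_ (abs_nonneg t)
      rw [abs_le]; exact ⟨by linarith [hω.1], hω.2⟩
  _ = |t| := mul_one _

lemma aux_Yint : Integrable Y P := by
  refine Integrable.mono' (integrable_const 1) hYmeas.aestronglyMeasurable ?_
  filter_upwards [hYbdd] with ω hω
  rw [Real.norm_eq_abs, abs_le]; exact ⟨by linarith [hω.1], hω.2⟩

lemma aux_mgf_le (t : ℝ) :
    ∫ ω, Real.exp (t * Y ω) ∂P ≤ Real.exp (t * (∫ ω, Y ω ∂P) + t ^ 2 / 8) := by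
  set μ := ∫ ω, Y ω ∂P with hμdef
  have hYint : Integrable Y P := aux_Yint P hYmeas hYbdd
  have hμ0 : 0 ≤ μ := integral_nonneg_of_ae <| by
    filter_upwards [hYbdd] with ω hω using hω.1
  have hμ1 : μ ≤ 1 := by
    have := integral_mono_ae hYint (integrable_const 1) <| by
      filter_upwards [hYbdd] with ω hω using hω.2
    simpa using this
  have hpt : ∀ᵐ ω ∂P, Real.exp (t * Y ω) ≤ (1 - Y ω) + Y ω * Real.exp t := by
    filter_upwards [hYbdd] with ω hω
    have := convexOn_exp.2 (Set.mem_univ (0 : ℝ)) (Set.mem_univ t)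
      (show (0:ℝ) ≤ 1 - Y ω by linarith [hω.2]) hω.1 (show (1 - Y ω) + Y ω = 1 by ring)
    simpa [smul_eq_mul, mul_comm] using this
  have h1 : Integrable (fun ω => 1 - Y ω) P := (integrable_const 1).sub hYint
  have h2 : Integrable (fun ω => Y ω * Real.exp t) P := hYint.mul_const _
  have hRHSint : Integrable (fun ω => (1 - Y ω) + Y ω * Real.exp t) P := h1.add h2
  calc ∫ ω, Real.exp (t * Y ω) ∂P ≤ ∫ ω, ((1 - Y ω) + Y ω * Real.exp t) ∂P :=
        integral_mono_ae (aux_int P hYmeas hYbdd t) hRHSint hpt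
  _ = (1 - μ) + μ * Real.exp t := by
      rw [integral_add h1 h2, integral_sub (integrable_const 1) hYint,
        integral_mul_const, integral_const]
      simp [hμdef]
  _ ≤ Real.exp (μ * t + t ^ 2 / 8) := hoeffding_key μ hμ0 hμ1 t
  _ = Real.exp (t * μ + t ^ 2 / 8) := by rw [mul_comm μ t]

end Aux

/-- Hoeffding's inequality: if `X₁, …, X_m` are independent random variables with
values in `[0,1]` and `X̄` is their empirical mean, then for all `ξ > 0`,
`P(X̄ - E[X̄] ≥ ξ) ≤ e^{-2 m ξ²}`. -/
theorem hoeffding_inequality {Ω : Type*} [MeasurableSpace Ω] (P : Measure Ω)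
    [IsProbabilityMeasure P] (m : ℕ) (hm : 0 < m) (X : Fin m → Ω → ℝ)
    (hmeas : ∀ i, Measurable (X i))
    (hindep : iIndepFun X P)
    (hbdd : ∀ i, ∀ᵐ ω ∂P, X i ω ∈ Set.Icc (0 : ℝ) 1)
    (ξ : ℝ) (hξ : 0 < ξ) :
    (P {ω | (m : ℝ)⁻¹ * ∑ i, X i ω - ∫ ω', (m : ℝ)⁻¹ * ∑ i, X i ω' ∂P ≥ ξ}).toReal ≤
      Real.exp (-2 * m * ξ ^ 2) := by
  have hm' : (0:ℝ) < m := Nat.cast_pos.mpr hm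
  set S : Ω → ℝ := ∑ i, X i with hSdef
  have hSapp : ∀ ω, S ω = ∑ i, X i ω := fun ω => by simp [hSdef]
  set c : ℝ := ∫ ω, S ω ∂P with hcdef
  set t : ℝ := 4 * ξ with htdef
  have ht : 0 ≤ t := by positivity
  -- rewrite the event
  have hintS : ∫ ω', (m : ℝ)⁻¹ * ∑ i, X i ω' ∂P = (m:ℝ)⁻¹ * c := by
    rw [hcdef]
    simp_rw [hSapp]
    exact integral_const_mul _ _
  have hset : {ω | (m : ℝ)⁻¹ * ∑ i, X i ω - ∫ ω', (m : ℝ)⁻¹ * ∑ i, X i ω' ∂P ≥ ξ} =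
      {ω | (m:ℝ) * ξ ≤ S ω - c} := by
    ext ω
    simp only [Set.mem_setOf_eq, hintS, ge_iff_le]
    simp only [← hSapp]
    rw [← sub_nonneg, ← sub_nonneg (b := (m:ℝ) * ξ)]
    constructor <;> intro h <;>
      nlinarith [mul_inv_cancel₀ hm'.ne', inv_pos.mpr hm', hm']
  -- integrability of exp of the sum
  have hXiint : ∀ (u : ℝ) i, Integrable (fun ω => Real.exp (u * X i ω)) P :=
    fun u i => aux_int P (hmeas i) (hbdd i) u
  have hSint : Integrable (fun ω => Real.exp (t * S ω)) P := by
    simpa [hSdef] using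
      hindep.integrable_exp_mul_sum hmeas (s := Finset.univ) (fun i _ => hXiint t i)
  have hYint : Integrable (fun ω => Real.exp (t * (S ω - c))) P := by
    have heq : (fun ω => Real.exp (t * (S ω - c)))
        = fun ω => Real.exp (t * S ω) * Real.exp (t * (-c)) := by
      funext ω; rw [← Real.exp_add]; ring_nf
    rw [heq]
    exact hSint.mul_const _
  -- Chernoff bound
  have hcher := measure_ge_le_exp_mul_mgf (X := fun ω => S ω - c) (μ := P)
    ((m:ℝ) * ξ) ht hYint
  -- bound the mgf
  have hmgf_shift : mgf (fun ω => S ω - c) P t = Real.exp (t * (-c)) * mgf S P t := by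
    unfold mgf
    have heq : (fun ω => Real.exp (t * (S ω - c)))
        = fun ω => Real.exp (t * S ω) * Real.exp (t * (-c)) := by
      funext ω; rw [← Real.exp_add]; ring_nf
    simp_rw [heq]
    rw [integral_mul_const, mul_comm]
  have hmgf_sum : mgf S P t = ∏ i, mgf (X i) P t := by
    rw [hSdef]; exact hindep.mgf_sum hmeas Finset.univ
  have hc_sum : c = ∑ i, ∫ ω, X i ω ∂P := by
    rw [hcdef]
    simp_rw [hSapp]
    exact integral_finset_sum _ (fun i _ => aux_Yint P (hmeas i) (hbdd i))
  have hmgf_le : mgf S P t ≤ Real.exp (t * c + m * (t ^ 2 / 8)) := by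
    rw [hmgf_sum]
    calc ∏ i, mgf (X i) P t ≤ ∏ i, Real.exp (t * (∫ ω, X i ω ∂P) + t ^ 2 / 8) := by
          refine Finset.prod_le_prod (fun i _ => mgf_nonneg) (fun i _ => ?_)
          exact aux_mgf_le P (hmeas i) (hbdd i) t
    _ = Real.exp (∑ i, (t * (∫ ω, X i ω ∂P) + t ^ 2 / 8)) := (Real.exp_sum _ _).symm
    _ = Real.exp (t * c + m * (t ^ 2 / 8)) := by
        rw [Finset.sum_add_distrib, ← Finset.mul_sum, ← hc_sum, Finset.sum_const]
        simp [nsmul_eq_mul]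
  -- put everything together
  rw [hset]
  calc (P {ω | (m:ℝ) * ξ ≤ S ω - c}).toReal
      ≤ Real.exp (-t * ((m:ℝ) * ξ)) * mgf (fun ω => S ω - c) P t := hcher
  _ = Real.exp (-t * ((m:ℝ) * ξ)) * (Real.exp (t * (-c)) * mgf S P t) := by
        rw [hmgf_shift]
  _ ≤ Real.exp (-t * ((m:ℝ) * ξ)) * (Real.exp (t * (-c)) * Real.exp (t * c + m * (t ^ 2 / 8))) := by
        gcongr
  _ = Real.exp (-2 * m * ξ ^ 2) := by
        rw [← Real.exp_add, ← Real.exp_add]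
        congr 1
        rw [htdef]; ring
end
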